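/- arXiv:2508.04486 — 2 statements merged into one kernel-verified Lean document; each statement's English description precedes it below -/
import Mathlib

section
/- Pure-state pathwise form of Theorem 1 (quantum circuit complexity upper bounds fidelity change): Let n ≥ 1, d = 2^n, and let U be a unitary path on ℂ^d with Hermitian generator G(s) and real Pauli coefficients h_f(s) = 2^{-n}·Re(tr(P(f)·G(s))), so that G(s) = Σ_f h_f(s)·P(f). Then for every unit vector ψ₀ ∈ ℂ^d, writing ψ₁ = U(1)ψ₀, one has √(1 − |⟨ψ₀, ψ₁⟩|) ≤ ∫₀¹ Σ_f |h_f(s)| ds. (The left-hand side equals D_B(ρ₀, ρ₁)/√2, where D_B is the Bures distance and ρ_i = |ψ_i⟩⟨ψ_i|, and the right-hand side is the integrand cost whose infimum over paths is Nielsen's quantum circuit complexity.) -/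
/-!
Along the path, the state `U(s)ψ₀` moves with speed `‖U'(s)ψ₀‖ ≤ ‖U'(s)‖ = ‖G(s)‖`, and since
Pauli strings are unitary (operator norm `1`), the Pauli expansion of `G(s)` gives
`‖G(s)‖ ≤ Σ_f |h_f(s)|`; integrating bounds `‖ψ₁ - ψ₀‖`. For unit vectors,
`‖ψ₀ - ψ₁‖² = 2 - 2 Re⟨ψ₀, ψ₁⟩ ≥ 2 (1 - |⟨ψ₀, ψ₁⟩|)`.
-/

noncomputable section

open Matrix MeasureTheory Set
open scoped Matrix.Norms.L2Operator

/-- The 2×2 identity and the Pauli matrices X, Y, Z. -/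
def pauli : Fin 4 → Matrix (Fin 2) (Fin 2) ℂ
  | 0 => 1
  | 1 => !![0, 1; 1, 0]
  | 2 => !![0, -Complex.I; Complex.I, 0]
  | 3 => !![1, 0; 0, -1]

/-- The `n`-qubit Pauli string `P(f)` indexed by `f : Fin n → Fin 4`, with entries
`P(f)(x, y) = ∏ j, p_{f j}(x j, y j)`. -/
def pauliString {n : ℕ} (f : Fin n → Fin 4) :
    Matrix (Fin n → Fin 2) (Fin n → Fin 2) ℂ :=
  Matrix.of fun x y => ∏ j, pauli (f j) (x j) (y j)

/-- The (Hermitian) generator `G(s) = i • (U'(s)) * (U(s))ᴴ` of a unitary path. -/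
def generator {ι : Type*} [Fintype ι] [DecidableEq ι]
    (U : ℝ → Matrix ι ι ℂ) (s : ℝ) : Matrix ι ι ℂ :=
  Complex.I • (deriv U s * (U s)ᴴ)

/-- The real Pauli coefficients `h_f(s) = 2^{-n} · Re(tr(P(f) · G(s)))` of the generator,
so that `G(s) = Σ_f h_f(s) • P(f)` whenever `G(s)` is Hermitian. -/
def pauliCoeff {n : ℕ} (U : ℝ → Matrix (Fin n → Fin 2) (Fin n → Fin 2) ℂ)
    (f : Fin n → Fin 4) (s : ℝ) : ℝ :=
  ((2 : ℝ) ^ n)⁻¹ * ((pauliString f * generator U s).trace).re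

/-- The standard complex inner product `⟨φ, χ⟩ = Σ_i conj(φ i) * χ i` on `ι → ℂ`. -/
def cinner {ι : Type*} [Fintype ι] (φ χ : ι → ℂ) : ℂ := ∑ i, star (φ i) * χ i

open scoped InnerProductSpace

namespace Matrix

theorem of_prod_mul_of_prod {ι α β γ R : Type*} [Fintype ι] [DecidableEq ι]
    [Fintype β] [CommSemiring R] (A : ι → Matrix α β R) (B : ι → Matrix β γ R) :
    (of fun (x : ι → α) (y : ι → β) => ∏ j, A j (x j) (y j)) *
        (of fun (y : ι → β) (z : ι → γ) => ∏ j, B j (y j) (z j)) =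
      of fun x z => ∏ j, (A j * B j) (x j) (z j) := by
  ext x z
  simp only [mul_apply, of_apply, ← Finset.prod_mul_distrib, Fintype.prod_sum]

theorem of_prod_one {ι α R : Type*} [Fintype ι] [DecidableEq α] [CommSemiring R] :
    (of fun x y : ι → α => ∏ j, (1 : Matrix α α R) (x j) (y j)) = 1 := by
  ext x y
  simp only [of_apply, one_apply, Finset.prod_boole, Finset.mem_univ, true_implies, funext_iff]

end Matrix

section Pauli

theorem pauli_conjTranspose (k : Fin 4) : (pauli k)ᴴ = pauli k := by
  fin_cases k <;> ext i j <;> fin_cases i <;> fin_cases j <;> simp [pauli]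

theorem pauli_mul_self (k : Fin 4) : pauli k * pauli k = 1 := by
  fin_cases k <;> ext i j <;> fin_cases i <;> fin_cases j <;>
    simp [pauli, mul_apply, Fin.sum_univ_two, one_apply]

theorem sum_pauli_apply_mul_pauli_apply (x y a b : Fin 2) :
    ∑ k, pauli k x y * pauli k a b = if x = b ∧ y = a then 2 else 0 := by
  fin_cases x <;> fin_cases y <;> fin_cases a <;> fin_cases b <;>
    simp [pauli, Fin.sum_univ_four] <;> norm_num

variable {n : ℕ}

theorem pauliString_conjTranspose (f : Fin n → Fin 4) : (pauliString f)ᴴ = pauliString f := by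
  ext x y
  simp only [conjTranspose_apply, pauliString, of_apply, star_prod]
  exact Finset.prod_congr rfl fun j _ => by rw [← conjTranspose_apply, pauli_conjTranspose]

theorem pauliString_mul_self (f : Fin n → Fin 4) : pauliString f * pauliString f = 1 := by
  simp only [pauliString, of_prod_mul_of_prod, pauli_mul_self, of_prod_one]

theorem pauliString_mem_unitary (f : Fin n → Fin 4) :
    pauliString f ∈ unitary (Matrix (Fin n → Fin 2) (Fin n → Fin 2) ℂ) :=
  mem_unitaryGroup_iff.2 <| by
    rw [star_eq_conjTranspose, pauliString_conjTranspose, pauliString_mul_self]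

theorem sum_pauliString_apply_mul_pauliString_apply (x y a b : Fin n → Fin 2) :
    ∑ f, pauliString f x y * pauliString f a b = if x = b ∧ y = a then (2 : ℂ) ^ n else 0 := by
  simp only [pauliString, of_apply, ← Finset.prod_mul_distrib]
  rw [← Fintype.prod_sum (fun j k => pauli k (x j) (y j) * pauli k (a j) (b j))]
  simp only [sum_pauli_apply_mul_pauli_apply, Finset.prod_ite_zero, Finset.prod_const,
    Finset.card_univ, Fintype.card_fin, Finset.mem_univ, forall_const, forall_and, funext_iff]

theorem sum_trace_pauliString_mul_smul_pauliString
    (M : Matrix (Fin n → Fin 2) (Fin n → Fin 2) ℂ) :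
    ∑ f, (((2 : ℂ) ^ n)⁻¹ * (pauliString f * M).trace) • pauliString f = M := by
  ext x y
  calc _ = ∑ a, ∑ b, ((2 : ℂ) ^ n)⁻¹ * M b a * ∑ f, pauliString f a b * pauliString f x y := by
        simp only [Matrix.sum_apply, Matrix.smul_apply, smul_eq_mul, trace, diag_apply, mul_apply,
          Finset.mul_sum, Finset.sum_mul]
        rw [Finset.sum_comm]
        refine Finset.sum_congr rfl fun a _ => ?_
        rw [Finset.sum_comm]
        exact Finset.sum_congr rfl fun b _ => Finset.sum_congr rfl fun f _ => by ring
    _ = M x y := by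
        simp only [sum_pauliString_apply_mul_pauliString_apply, ite_and, mul_ite, mul_zero,
          Finset.sum_ite_irrel, Finset.sum_ite_eq', Finset.mem_univ, ↓reduceIte,
          Finset.sum_const_zero]
        field_simp

theorem Matrix.IsHermitian.ofReal_re_trace_pauliString_mul
    {M : Matrix (Fin n → Fin 2) (Fin n → Fin 2) ℂ} (hM : M.IsHermitian) (f : Fin n → Fin 4) :
    (((pauliString f * M).trace).re : ℂ) = (pauliString f * M).trace := by
  refine Complex.conj_eq_iff_re.1 (show star _ = _ from ?_)
  rw [← trace_conjTranspose, conjTranspose_mul, hM.eq, pauliString_conjTranspose,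
    trace_mul_comm]

theorem Matrix.IsHermitian.norm_le_sum_abs_pauli
    {M : Matrix (Fin n → Fin 2) (Fin n → Fin 2) ℂ} (hM : M.IsHermitian) :
    ‖M‖ ≤ ∑ f : Fin n → Fin 4, |((2 : ℝ) ^ n)⁻¹ * ((pauliString f * M).trace).re| := by
  conv_lhs => rw [← sum_trace_pauliString_mul_smul_pauliString M]
  refine (norm_sum_le _ _).trans_eq (Finset.sum_congr rfl fun f _ => ?_)
  have hcoeff : ((2 : ℂ) ^ n)⁻¹ * (pauliString f * M).trace =
      (((2 : ℝ) ^ n)⁻¹ * ((pauliString f * M).trace).re : ℝ) := by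
    rw [Complex.ofReal_mul, hM.ofReal_re_trace_pauliString_mul f]
    push_cast
    rfl
  rw [norm_smul, CStarRing.norm_of_mem_unitary (pauliString_mem_unitary f), mul_one, hcoeff,
    Complex.norm_real, Real.norm_eq_abs]

end Pauli

section UnitaryPath

variable {ι : Type*} [Fintype ι] [DecidableEq ι] {U : ℝ → Matrix ι ι ℂ} {S : Set ℝ} {t : ℝ}

theorem deriv_mul_conjTranspose_add_mul_conjTranspose_deriv (hU : DifferentiableAt ℝ U t)
    (hS : UniqueDiffWithinAt ℝ S t) (ht : t ∈ S) (hunit : ∀ τ ∈ S, U τ * (U τ)ᴴ = 1) :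
    deriv U t * (U t)ᴴ + U t * (deriv U t)ᴴ = 0 := by
  have hprod : HasDerivAt (fun τ => U τ * (U τ)ᴴ) (deriv U t * (U t)ᴴ + U t * (deriv U t)ᴴ) t :=
    hU.hasDerivAt.mul hU.hasDerivAt.star
  have hconst : HasDerivWithinAt (fun τ => U τ * (U τ)ᴴ) 0 S t :=
    (hasDerivWithinAt_const t S 1).congr hunit (hunit t ht)
  exact hS.eq_deriv _ hprod.hasDerivWithinAt hconst

theorem isHermitian_generator (hU : DifferentiableAt ℝ U t)
    (hS : UniqueDiffWithinAt ℝ S t) (ht : t ∈ S) (hunit : ∀ τ ∈ S, U τ * (U τ)ᴴ = 1) :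
    (generator U t).IsHermitian := by
  have h := deriv_mul_conjTranspose_add_mul_conjTranspose_deriv hU hS ht hunit
  rw [IsHermitian, generator, conjTranspose_smul, conjTranspose_mul, conjTranspose_conjTranspose,
    eq_neg_of_add_eq_zero_right h]
  simp

theorem norm_deriv_eq_norm_generator (hunit : U t * (U t)ᴴ = 1) :
    ‖deriv U t‖ = ‖generator U t‖ := by
  have hU : U t ∈ unitary (Matrix ι ι ℂ) := mem_unitaryGroup_iff.2 hunit
  have hderiv : deriv U t = (-Complex.I) • (generator U t * U t) := by
    rw [generator, smul_mul_assoc, smul_smul, mul_assoc, ← star_eq_conjTranspose,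
      Unitary.star_mul_self_of_mem hU]
    simp
  rw [hderiv, norm_smul, CStarRing.norm_mul_mem_unitary _ hU]
  simp

end UnitaryPath

section PauliCoeff

variable {n : ℕ} {U : ℝ → Matrix (Fin n → Fin 2) (Fin n → Fin 2) ℂ} {S : Set ℝ} {t : ℝ}

theorem continuousOn_pauliCoeff (hU : ContinuousOn U S) (hU' : ContinuousOn (deriv U) S)
    (f : Fin n → Fin 4) : ContinuousOn (pauliCoeff U f) S := by
  unfold pauliCoeff generator
  fun_prop

theorem norm_deriv_le_sum_abs_pauliCoeff (hU : DifferentiableAt ℝ U t)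
    (hS : UniqueDiffWithinAt ℝ S t) (ht : t ∈ S) (hunit : ∀ τ ∈ S, U τ * (U τ)ᴴ = 1) :
    ‖deriv U t‖ ≤ ∑ f, |pauliCoeff U f t| := by
  rw [norm_deriv_eq_norm_generator (hunit t ht)]
  exact (isHermitian_generator hU hS ht hunit).norm_le_sum_abs_pauli

end PauliCoeff

section InnerProduct

variable {𝕜 E : Type*} [RCLike 𝕜] [SeminormedAddCommGroup E] [InnerProductSpace 𝕜 E]
  {x y : E}

theorem two_mul_one_sub_norm_inner_le_norm_sub_sq (hx : ‖x‖ = 1) (hy : ‖y‖ = 1) :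
    2 * (1 - ‖⟪x, y⟫_𝕜‖) ≤ ‖x - y‖ ^ 2 := by
  rw [norm_sub_sq (𝕜 := 𝕜), hx, hy]
  linarith [RCLike.re_le_norm ⟪x, y⟫_𝕜]

theorem sqrt_one_sub_norm_inner_le_norm_sub (hx : ‖x‖ = 1) (hy : ‖y‖ = 1) :
    √(1 - ‖⟪x, y⟫_𝕜‖) ≤ ‖x - y‖ := by
  have hle : ‖⟪x, y⟫_𝕜‖ ≤ 1 := by simpa [hx, hy] using norm_inner_le_norm (𝕜 := 𝕜) x y
  refine Real.sqrt_le_iff.2 ⟨norm_nonneg _, ?_⟩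
  linarith [two_mul_one_sub_norm_inner_le_norm_sub_sq (𝕜 := 𝕜) hx hy]

end InnerProduct

section EuclideanVectors

variable {ι : Type*} [Fintype ι]

theorem cinner_eq_inner (φ χ : ι → ℂ) : cinner φ χ = ⟪WithLp.toLp 2 φ, WithLp.toLp 2 χ⟫_ℂ := by
  simp [cinner, EuclideanSpace.inner_toLp_toLp, dotProduct, mul_comm]

theorem norm_toLp_eq_one_of_cinner_self {φ : ι → ℂ} (hφ : cinner φ φ = 1) :
    ‖WithLp.toLp 2 φ‖ = 1 := by
  have h : ‖WithLp.toLp 2 φ‖ ^ 2 = 1 ^ 2 := by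
    rw [norm_sq_eq_re_inner (𝕜 := ℂ), ← cinner_eq_inner, hφ, one_pow, RCLike.one_re]
  exact (pow_left_inj₀ (norm_nonneg _) zero_le_one two_ne_zero).1 h

theorem norm_toLp_mulVec_of_mem_unitary [DecidableEq ι] {A : Matrix ι ι ℂ}
    (hA : A ∈ unitary (Matrix ι ι ℂ)) (φ : ι → ℂ) :
    ‖WithLp.toLp 2 (A *ᵥ φ)‖ = ‖WithLp.toLp 2 φ‖ := by
  rw [← toEuclideanCLM_toLp]
  exact ContinuousLinearMap.norm_map_of_mem_unitary (Unitary.map_mem toEuclideanCLM hA) _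

end EuclideanVectors

theorem qcc_upper_bounds_fidelity_change_general (n : ℕ)
    (U : ℝ → Matrix (Fin n → Fin 2) (Fin n → Fin 2) ℂ)
    (hUdiff : ∀ s ∈ Icc (0:ℝ) 1, DifferentiableAt ℝ U s)
    (hUderiv : ContinuousOn (deriv U) (Icc (0:ℝ) 1))
    (hUunit : ∀ s ∈ Icc (0:ℝ) 1, U s * (U s)ᴴ = 1)
    (hU0 : U 0 = 1)
    (ψ₀ : (Fin n → Fin 2) → ℂ) (hψ₀ : cinner ψ₀ ψ₀ = 1)
    (ψ₁ : (Fin n → Fin 2) → ℂ) (hψ₁ : ψ₁ = (U 1).mulVec ψ₀) :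
    Real.sqrt (1 - ‖cinner ψ₀ ψ₁‖) ≤
      ∫ s in (0:ℝ)..1, ∑ f : Fin n → Fin 4, |pauliCoeff U f s| := by
  have hUcont : ContinuousOn U (Icc 0 1) := fun s hs =>
    (hUdiff s hs).continuousAt.continuousWithinAt
  have hx₀ : ‖WithLp.toLp 2 ψ₀‖ = 1 := norm_toLp_eq_one_of_cinner_self hψ₀
  have hx₁ : ‖WithLp.toLp 2 ψ₁‖ = 1 := by
    rw [hψ₁, norm_toLp_mulVec_of_mem_unitary (mem_unitaryGroup_iff.2 (hUunit 1 (by simp))), hx₀]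
  have hbound : ∀ᵐ t, t ∈ Ioo (0:ℝ) 1 → ‖deriv U t‖ ≤ ∑ f, |pauliCoeff U f t| :=
    ae_of_all _ fun t ht => norm_deriv_le_sum_abs_pauliCoeff (hUdiff t (Ioo_subset_Icc_self ht))
      (uniqueDiffOn_Icc zero_lt_one t (Ioo_subset_Icc_self ht)) (Ioo_subset_Icc_self ht) hUunit
  have hint : IntervalIntegrable (fun s => ∑ f, |pauliCoeff U f s|) volume 0 1 :=
    (continuousOn_finsetSum _ fun f _ =>
      (continuousOn_pauliCoeff hUcont hUderiv f).abs).intervalIntegrable_of_Icc zero_le_one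
  calc √(1 - ‖cinner ψ₀ ψ₁‖) ≤ ‖WithLp.toLp 2 ψ₀ - WithLp.toLp 2 ψ₁‖ := by
        rw [cinner_eq_inner]; exact sqrt_one_sub_norm_inner_le_norm_sub hx₀ hx₁
    _ = ‖WithLp.toLp 2 ((U 1 - U 0) *ᵥ ψ₀)‖ := by
        rw [norm_sub_rev, sub_mulVec, hU0, one_mulVec, hψ₁, WithLp.toLp_sub]
    _ ≤ ‖U 1 - U 0‖ := by simpa [hx₀] using l2_opNorm_mulVec (U 1 - U 0) (WithLp.toLp 2 ψ₀)
    _ ≤ ∫ s in (0:ℝ)..1, ∑ f, |pauliCoeff U f s| :=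
        norm_sub_le_integral_of_norm_deriv_le_of_le zero_le_one hUcont
          (fun t ht => (hUdiff t (Ioo_subset_Icc_self ht)).differentiableWithinAt) hbound hint

theorem qcc_upper_bounds_fidelity_change (n : ℕ) (hn : 1 ≤ n)
    (U : ℝ → Matrix (Fin n → Fin 2) (Fin n → Fin 2) ℂ)
    (hUdiff : ∀ s ∈ Icc (0:ℝ) 1, DifferentiableAt ℝ U s)
    (hUderiv : ContinuousOn (deriv U) (Icc (0:ℝ) 1))
    (hUunit : ∀ s ∈ Icc (0:ℝ) 1, U s * (U s)ᴴ = 1)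
    (hU0 : U 0 = 1)
    (ψ₀ : (Fin n → Fin 2) → ℂ) (hψ₀ : cinner ψ₀ ψ₀ = 1)
    (ψ₁ : (Fin n → Fin 2) → ℂ) (hψ₁ : ψ₁ = (U 1).mulVec ψ₀) :
    Real.sqrt (1 - ‖cinner ψ₀ ψ₁‖) ≤
      ∫ s in (0:ℝ)..1, ∑ f : Fin n → Fin 4, |pauliCoeff U f s| :=
  qcc_upper_bounds_fidelity_change_general n U hUdiff hUderiv hUunit hU0 ψ₀ hψ₀ ψ₁ hψ₁
end
end

section
/- Second inequality of Theorem 1, pure-state form (Bures distance is below the quantum Fisher complexity / Fubini–Study arclength bound): Let E be a finite-dimensional complex inner product space and let ψ : ℝ → E be continuously differentiable on [0,1] with ‖ψ(s)‖ = 1 for every s ∈ [0,1]. Then √(2·(1 − |⟨ψ(0), ψ(1)⟩|)) ≤ ∫₀¹ √(‖ψ'(s)‖² − |⟨ψ(s), ψ'(s)⟩|²) ds. (The left-hand side is the Bures distance D_B between the pure states |ψ(0)⟩⟨ψ(0)| and |ψ(1)⟩⟨ψ(1)|, and the integrand is (1/2)√(F_Q(s)), where F_Q(s) = 4(‖ψ'(s)‖²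 − |⟨ψ(s), ψ'(s)⟩|²) is the pure-state quantum Fisher information of the path.) -/
/-!
Since `‖ψ‖ = 1`, the number `⟪ψ, ψ'⟫` is purely imaginary, so multiplying `ψ` by the phase
`exp (-i θ)` with `θ' = Im ⟪ψ, ψ'⟫` gives a lift `φ` of the same path of states whose velocity is
a phase times `ψ' - ⟪ψ, ψ'⟫ ψ`, the component of `ψ'` orthogonal to `ψ`, of norm
`√(‖ψ'‖² - |⟪ψ, ψ'⟫|²)`. The length of `φ` bounds the chord `‖φ 1 - φ 0‖`, and for unit vectors
`‖x - y‖² = 2 - 2 Re ⟪x, y⟫ ≥ 2 (1 - |⟪x, y⟫|)`, a phase-invariant bound.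
-/

open MeasureTheory Set Filter Topology

section InnerProduct

variable {𝕜 E : Type*} [RCLike 𝕜] [NormedAddCommGroup E] [InnerProductSpace 𝕜 E]

local notation "⟪" x ", " y "⟫" => inner 𝕜 x y

theorem norm_inner_smul_smul_of_norm_eq_one {c d : 𝕜} (hc : ‖c‖ = 1) (hd : ‖d‖ = 1) (x y : E) :
    ‖⟪c • x, d • y⟫‖ = ‖⟪x, y⟫‖ := by
  simp [inner_smul_left, inner_smul_right, hc, hd]

theorem sqrt_two_mul_one_sub_norm_inner_le_norm_sub {x y : E} (hx : ‖x‖ = 1) (hy : ‖y‖ = 1) :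
    √(2 * (1 - ‖⟪x, y⟫‖)) ≤ ‖x - y‖ := by
  rw [Real.sqrt_le_left (norm_nonneg _), @norm_sub_sq 𝕜, hx, hy]
  linarith [RCLike.re_le_norm ⟪x, y⟫]

theorem norm_sub_inner_smul_eq_sqrt {u : E} (hu : ‖u‖ = 1) (v : E) :
    ‖v - ⟪u, v⟫ • u‖ = √(‖v‖ ^ 2 - ‖⟪u, v⟫‖ ^ 2) := by
  have hre : RCLike.re ⟪v, ⟪u, v⟫ • u⟫ = ‖⟪u, v⟫‖ ^ 2 := by
    rw [inner_smul_right, ← inner_conj_symm v u, RCLike.mul_conj]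
    exact_mod_cast RCLike.ofReal_re (K := 𝕜) _
  rw [← Real.sqrt_sq (norm_nonneg (v - _)), @norm_sub_sq 𝕜, hre, norm_smul, hu]
  ring_nf

end InnerProduct

theorem ContinuousOn.exists_hasDerivAt_Icc {F : Type*} [NormedAddCommGroup F] [NormedSpace ℝ F]
    [CompleteSpace F] {f : ℝ → F} {a b : ℝ} (hab : a ≤ b) (hf : ContinuousOn f (Icc a b)) :
    ∃ θ : ℝ → F, Differentiable ℝ θ ∧ ∀ s ∈ Icc a b, HasDerivAt θ (f s) s := by
  have hg : Continuous (IccExtend hab ((Icc a b).domRestrict f)) :=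
    continuous_IccExtend_iff.2 hf.domRestrict
  refine ⟨fun u => ∫ s in a..u, IccExtend hab ((Icc a b).domRestrict f) s,
    fun u => (hg.integral_hasStrictDerivAt a u).hasDerivAt.differentiableAt, fun s hs => ?_⟩
  simpa [IccExtend_of_mem hab _ hs, Set.domRestrict] using
    (hg.integral_hasStrictDerivAt a s).hasDerivAt

theorem norm_sub_le_integral_norm_of_hasDerivAt {F : Type*} [NormedAddCommGroup F]
    [NormedSpace ℝ F] [CompleteSpace F] {f f' : ℝ → F} {a b : ℝ} (hab : a ≤ b)
    (hf : ContinuousOn f (Icc a b))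
    (hderiv : ∀ s ∈ Ioo a b, HasDerivAt f (f' s) s) (hint : IntervalIntegrable f' volume a b) :
    ‖f b - f a‖ ≤ ∫ s in a..b, ‖f' s‖ := by
  rw [← intervalIntegral.integral_eq_sub_of_hasDeriv_right_of_le hab hf
    (fun s hs => (hderiv s hs).hasDerivWithinAt) hint]
  exact intervalIntegral.norm_integral_le_integral_norm hab

open scoped ComplexInnerProductSpace

section Complex

variable {E : Type*} [NormedAddCommGroup E] [InnerProductSpace ℂ E]

theorem HasDerivAt.inner_eq_im_mul_I_of_eventually_norm_eq_one {ψ : ℝ → E} {v : E} {s : ℝ}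
    (hd : HasDerivAt ψ v s) (hψ : ∀ᶠ t in 𝓝 s, ‖ψ t‖ = 1) :
    ⟪ψ s, v⟫ = (⟪ψ s, v⟫.im : ℂ) * Complex.I := by
  have hconst : HasDerivAt (fun t => ⟪ψ t, ψ t⟫) 0 s :=
    (hasDerivAt_const s (1 : ℂ)).congr_of_eventuallyEq <| hψ.mono fun t ht => by
      simp [inner_self_eq_norm_sq_to_K, ht]
  have hsum : ⟪ψ s, v⟫ + ⟪v, ψ s⟫ = 0 := (hd.inner ℂ hd).unique hconst
  have hre : ⟪ψ s, v⟫.re = 0 := by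
    have := congrArg Complex.re hsum
    rw [Complex.add_re, ← inner_conj_symm v (ψ s), Complex.conj_re, Complex.zero_re] at this
    linarith
  apply Complex.ext <;> simp [hre]

theorem exists_horizontal_lift {ψ : ℝ → E} {a b : ℝ} (hab : a ≤ b)
    (hdiff : ∀ s ∈ Icc a b, DifferentiableAt ℝ ψ s)
    (hderiv : ContinuousOn (deriv ψ) (Icc a b))
    (hnorm : ∀ s ∈ Icc a b, ‖ψ s‖ = 1) :
    ∃ c : ℝ → ℂ, (∀ s, ‖c s‖ = 1) ∧ Continuous c ∧
      ∀ s ∈ Ioo a b, HasDerivAt (fun t => c t • ψ t)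
        (c s • (deriv ψ s - ⟪ψ s, deriv ψ s⟫ • ψ s)) s := by
  have hψ : ContinuousOn ψ (Icc a b) := fun s hs => (hdiff s hs).continuousAt.continuousWithinAt
  obtain ⟨θ, hθ_diff, hθ⟩ := (Complex.continuous_im.comp_continuousOn
    (hψ.inner hderiv)).exists_hasDerivAt_Icc hab
  refine ⟨fun t => Complex.exp (↑(-θ t) * Complex.I), fun t => Complex.norm_exp_ofReal_mul_I _,
    by have := hθ_diff.continuous; fun_prop, fun s hs => ?_⟩
  have hs' := Ioo_subset_Icc_self hs
  have hinner := (hdiff s hs').hasDerivAt.inner_eq_im_mul_I_of_eventually_norm_eq_one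
    (eventually_of_mem (Icc_mem_nhds hs.1 hs.2) hnorm)
  have hc := (((hθ s hs').neg.ofReal_comp).mul_const Complex.I).cexp
  refine (hc.smul (hdiff s hs').hasDerivAt).congr_deriv ?_
  rw [hinner]
  simp only [Function.comp_apply, Pi.neg_apply, smul_sub, smul_smul]
  rw [sub_eq_add_neg, ← neg_smul]
  congr 2
  push_cast
  ring

end Complex

theorem bures_below_qfc {E : Type*} [NormedAddCommGroup E] [InnerProductSpace ℂ E]
    [FiniteDimensional ℂ E]
    (ψ : ℝ → E)
    (hdiff : ∀ s ∈ Icc (0:ℝ) 1, DifferentiableAt ℝ ψ s)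
    (hderiv : ContinuousOn (deriv ψ) (Icc (0:ℝ) 1))
    (hnorm : ∀ s ∈ Icc (0:ℝ) 1, ‖ψ s‖ = 1) :
    Real.sqrt (2 * (1 - ‖⟪ψ 0, ψ 1⟫‖)) ≤
      ∫ s in (0:ℝ)..1,
        Real.sqrt (‖deriv ψ s‖ ^ 2 - ‖⟪ψ s, deriv ψ s⟫‖ ^ 2) := by
  obtain ⟨c, hc_norm, hc_cont, hlift⟩ := exists_horizontal_lift zero_le_one hdiff hderiv hnorm
  have hψ : ContinuousOn ψ (Icc 0 1) := fun s hs => (hdiff s hs).continuousAt.continuousWithinAt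
  have hlift_norm : ∀ s ∈ Icc (0:ℝ) 1, ‖c s • ψ s‖ = 1 := fun s hs => by
    rw [norm_smul, hc_norm, hnorm s hs, one_mul]
  have hvelocity : ContinuousOn (fun s => c s • (deriv ψ s - ⟪ψ s, deriv ψ s⟫ • ψ s)) (Icc 0 1) :=
    hc_cont.continuousOn.smul (hderiv.sub ((hψ.inner hderiv).smul hψ))
  calc √(2 * (1 - ‖⟪ψ 0, ψ 1⟫‖))
      = √(2 * (1 - ‖⟪c 0 • ψ 0, c 1 • ψ 1⟫‖)) := by
        rw [norm_inner_smul_smul_of_norm_eq_one (hc_norm 0) (hc_norm 1)]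
    _ ≤ ‖c 1 • ψ 1 - c 0 • ψ 0‖ := by
        rw [norm_sub_rev]
        exact sqrt_two_mul_one_sub_norm_inner_le_norm_sub (hlift_norm 0 (by simp))
          (hlift_norm 1 (by simp))
    _ ≤ ∫ s in (0:ℝ)..1, ‖c s • (deriv ψ s - ⟪ψ s, deriv ψ s⟫ • ψ s)‖ :=
        norm_sub_le_integral_norm_of_hasDerivAt zero_le_one (hc_cont.continuousOn.smul hψ) hlift
          (hvelocity.intervalIntegrable_of_Icc zero_le_one)
    _ = ∫ s in (0:ℝ)..1, √(‖deriv ψ s‖ ^ 2 - ‖⟪ψ s, deriv ψ s⟫‖ ^ 2) := by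
        refine intervalIntegral.integral_congr fun s hs => ?_
        rw [uIcc_of_le zero_le_one] at hs
        simp only [norm_smul, hc_norm, one_mul, norm_sub_inner_smul_eq_sqrt (hnorm s hs)]
end
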